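/- arXiv:2509.11515 — 2 statements merged into one kernel-verified Lean document; each statement's English description precedes it below -/
import Mathlib

section
/- Under the hypotheses of Theorem 1 (G ∈ L¹(ℝ), Assumption 1, a ≥ 0, b ≠ 0, the contraction condition 2√π·N_{a,b}·l < 1, and in the case a = 0 additionally xG ∈ L¹(ℝ) and ∫_ℝ G = 0), the unique H⁴(ℝ) solution u of −u'''' + b u' + a u + ∫_ℝ G(x−y) F(u(y),y) dy = 0 does not vanish identically on ℝ, provided that the intersection of the supports of the Fourier transforms of F(0,·) and of G is a set of nonzero Lebesgue measure on ℝ. -/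
open MeasureTheory Real Filter Topology

/-- The Fourier transform `Ĝ(p) = (1/√(2π)) ∫ G(x) e^{-ipx} dx`. -/
noncomputable def fourierTransform (G : ℝ → ℝ) (p : ℝ) : ℂ :=
  (1 / Real.sqrt (2 * Real.pi)) * ∫ x : ℝ, (G x : ℂ) * Complex.exp (-Complex.I * p * x)

/-- The symbol `p⁴ - a - i b p` of the operator `d⁴/dx⁴ - b d/dx - a`. -/
noncomputable def denom (a b p : ℝ) : ℂ := (p : ℂ) ^ 4 - (a : ℂ) - Complex.I * b * p

/-- `N_{a,b}`: the maximum of the two sup-norms. -/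
noncomputable def Nab (G : ℝ → ℝ) (a b : ℝ) : ℝ :=
  max (⨆ p : ℝ, ‖fourierTransform G p / denom a b p‖)
      (⨆ p : ℝ, ‖(p : ℂ) ^ 4 * fourierTransform G p / denom a b p‖)

/-- `u ∈ H⁴(ℝ)`: four times differentiable with `u, u'''' ∈ L²(ℝ)`. -/
def IsH4 (u : ℝ → ℝ) : Prop :=
  (∀ k : ℕ, k < 4 → Differentiable ℝ (iteratedDeriv k u)) ∧
  MemLp u 2 (volume : Measure ℝ) ∧
  MemLp (iteratedDeriv 4 u) 2 (volume : Measure ℝ)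

/-- Assumption 1 on the nonlinearity `F` (on the whole real line), with Lipschitz constant `l`. -/
structure Assumption1 (F : ℝ → ℝ → ℝ) (l : ℝ) : Prop where
  caratheodory : ∀ u : ℝ, Measurable fun x => F u x
  exists_bound : ∃ (k : ℝ) (h : ℝ → ℝ), 0 < k ∧ (∀ x, 0 ≤ h x) ∧
    MemLp h 2 (volume : Measure ℝ) ∧ ∀ u x, |F u x| ≤ k * |u| + h x
  lipschitz_pos : 0 < l
  lipschitz : ∀ u₁ u₂ x : ℝ, |F u₁ x - F u₂ x| ≤ l * |u₁ - u₂|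

/-- `u` solves `-u'''' + b u' + a u + ∫_ℝ G(x-y) F(u(y),y) dy = 0` on `ℝ`. -/
def SolvesIDE (F : ℝ → ℝ → ℝ) (G : ℝ → ℝ) (a b : ℝ) (u : ℝ → ℝ) : Prop :=
  ∀ x : ℝ,
    -(iteratedDeriv 4 u x) + b * deriv u x + a * u x + (∫ y : ℝ, G (x - y) * F (u y) y) = 0

/-!
If `u ≡ 0`, the equation collapses to `∫ G(x - y) F(0, y) dy = 0` for all `x`. By the convolution
theorem, `√(2π) Ĝ(p) F(0,·)^(p)` is the Fourier transform of this convolution, so it vanishes for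
every `p`; when `G` or `F(0, ·)` is not integrable its Fourier integral is the junk value `0`, and
the product vanishes anyway. Hence the supports of the two transforms are disjoint.
-/

open scoped FourierTransform Convolution

theorem ofReal_sqrt_two_mul_pi_ne_zero : (√(2 * π) : ℂ) ≠ 0 := by
  exact_mod_cast (by positivity : 0 < √(2 * π)).ne'

theorem fourierTransform_eq_fourier (f : ℝ → ℝ) (p : ℝ) :
    fourierTransform f p = (√(2 * π) : ℂ)⁻¹ * 𝓕 (fun x ↦ (f x : ℂ)) (p / (2 * π)) := by
  rw [fourierTransform, Real.fourier_real_eq_integral_exp_smul, one_div]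
  congr 2 with x
  rw [smul_eq_mul, mul_comm]
  congr 2
  push_cast
  field_simp

@[simp]
theorem fourierTransform_zero (p : ℝ) : fourierTransform 0 p = 0 := by
  simp [fourierTransform]

theorem fourierTransform_of_not_integrable {f : ℝ → ℝ} (hf : ¬Integrable f) :
    fourierTransform f = 0 := by
  ext p
  rw [fourierTransform_eq_fourier, Real.fourier_eq, integral_undef, mul_zero, Pi.zero_apply]
  rw [Real.fourierIntegral_convergent_iff]
  exact fun h ↦ hf (by simpa using h.re)

theorem fourierTransform_convolution {f g : ℝ → ℝ} (hf : Integrable f) (hg : Integrable g)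
    (p : ℝ) :
    fourierTransform (fun x ↦ ∫ y, g (x - y) * f y) p =
      √(2 * π) * (fourierTransform f p * fourierTransform g p) := by
  have hconv : (fun x ↦ ((∫ y, g (x - y) * f y : ℝ) : ℂ)) =
      (fun x ↦ (f x : ℂ)) ⋆[ContinuousLinearMap.mul ℂ ℂ] (fun x ↦ (g x : ℂ)) := by
    ext x
    rw [convolution_def, ← integral_complex_ofReal]
    simp only [ContinuousLinearMap.mul_apply', Complex.ofReal_mul, mul_comm]
  have key : 𝓕 (fun x ↦ ((∫ y, g (x - y) * f y : ℝ) : ℂ)) (p / (2 * π)) =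
      𝓕 (fun x ↦ (f x : ℂ)) (p / (2 * π)) * 𝓕 (fun x ↦ (g x : ℂ)) (p / (2 * π)) := by
    rw [hconv]
    -- `exact` rather than `rw`: Mathlib's lemma carries the C⋆-algebra instances on `ℂ`.
    exact Real.fourier_mul_convolution_eq hf.ofReal hg.ofReal _
  have hsqrt := ofReal_sqrt_two_mul_pi_ne_zero
  simp only [fourierTransform_eq_fourier, key]
  field_simp

theorem fourierTransform_mul_eq_zero_of_convolution_eq_zero {f g : ℝ → ℝ}
    (h : ∀ x, ∫ y, g (x - y) * f y = 0) (p : ℝ) :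
    fourierTransform f p * fourierTransform g p = 0 := by
  by_cases hf : Integrable f
  · by_cases hg : Integrable g
    · have hconv := fourierTransform_convolution hf hg p
      rw [show (fun x ↦ ∫ y, g (x - y) * f y) = 0 from funext h, fourierTransform_zero,
        eq_comm, mul_eq_zero] at hconv
      exact hconv.resolve_left ofReal_sqrt_two_mul_pi_ne_zero
    · simp [fourierTransform_of_not_integrable hg]
  · simp [fourierTransform_of_not_integrable hf]

theorem disjoint_support_fourierTransform_of_convolution_eq_zero {f g : ℝ → ℝ}
    (h : ∀ x, ∫ y, g (x - y) * f y = 0) :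
    Disjoint (Function.support (fourierTransform f)) (Function.support (fourierTransform g)) :=
  Set.disjoint_left.2 fun p hfp hgp ↦
    mul_ne_zero hfp hgp (fourierTransform_mul_eq_zero_of_convolution_eq_zero h p)

theorem solution_nontrivial_real_line_general
    (G : ℝ → ℝ) (F : ℝ → ℝ → ℝ) (a b : ℝ)
    (hsupp : volume (Function.support (fourierTransform (fun x => F 0 x)) ∩
      Function.support (fourierTransform G)) ≠ 0)
    (u : ℝ → ℝ) (hsol : SolvesIDE F G a b u) :
    ¬ (∀ x : ℝ, u x = 0) := by
  intro hu
  obtain rfl : u = fun _ ↦ 0 := funext hu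
  have hconv : ∀ x, ∫ y, G (x - y) * F 0 y = 0 := fun x ↦ by simpa using hsol x
  apply hsupp
  rw [(disjoint_support_fourierTransform_of_convolution_eq_zero hconv).inter_eq, measure_empty]

/-- Theorem 1, nontriviality: under the hypotheses of Theorem 1 (in the case `a = 0`
additionally `xG ∈ L¹(ℝ)` and `∫ G = 0`), any `H⁴(ℝ)` solution of the integro-differential
equation does not vanish identically, provided that the intersection of the supports of the
Fourier transforms of `F(0,·)` and of `G` has nonzero Lebesgue measure. -/
theorem solution_nontrivial_real_line
    (G : ℝ → ℝ) (hG : Integrable G (volume : Measure ℝ))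
    (F : ℝ → ℝ → ℝ) (l : ℝ) (hF : Assumption1 F l)
    (a b : ℝ) (ha : 0 ≤ a) (hb : b ≠ 0)
    (hzero : a = 0 → Integrable (fun x => x * G x) (volume : Measure ℝ) ∧ (∫ x : ℝ, G x) = 0)
    (hcontr : 2 * Real.sqrt Real.pi * Nab G a b * l < 1)
    (hsupp : volume (Function.support (fourierTransform (fun x => F 0 x)) ∩
      Function.support (fourierTransform G)) ≠ 0)
    (u : ℝ → ℝ) (hu : IsH4 u) (hsol : SolvesIDE F G a b u) :
    ¬ (∀ x : ℝ, u x = 0) :=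
  solution_nontrivial_real_line_general G F a b hsupp u hsol
end

section
/- Let G : ℝ → ℝ with G ∈ L¹(ℝ) and x·G(x) ∈ L¹(ℝ), and let b ∈ ℝ, b ≠ 0. Then N_{0,b} := max{ sup_{p∈ℝ} |Ĝ(p)/(p⁴ − ibp)|, sup_{p∈ℝ} |p⁴Ĝ(p)/(p⁴ − ibp)| } is finite if and only if the orthogonality relation ∫_ℝ G(x) dx = 0 holds. -/
open MeasureTheory Real Filter Topology

/-!
Since `x G ∈ L¹`, the transform is Lipschitz at the origin, `|Ĝ p - Ĝ 0| ≤ ‖x G‖₁ |p| / √(2π)`,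
and `Ĝ 0 = ∫ G / √(2π)`. The symbol `p⁴ - i b p` vanishes only at `p = 0` and dominates both
`|p|⁴` and `|b| |p|`. Hence `p⁴ Ĝ / (p⁴ - i b p)` is always bounded by `sup |Ĝ|`, and if `Ĝ 0 = 0`
then `Ĝ / (p⁴ - i b p)` is bounded by `‖x G‖₁ / (√(2π) |b|)`. Conversely, if `Ĝ / (p⁴ - i b p)`
is bounded, then `Ĝ p → 0` as `p → 0`, and continuity of `Ĝ` forces `Ĝ 0 = 0`.
-/

lemma eq_zero_of_norm_div_le_of_tendsto_zero {X 𝕜 : Type*} [TopologicalSpace X] [NormedField 𝕜]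
    {f g : X → 𝕜} {x : X} [(𝓝[≠] x).NeBot] (hf : ContinuousAt f x)
    (hg : Tendsto g (𝓝[≠] x) (𝓝 0)) (hg_ne : ∀ᶠ y in 𝓝[≠] x, g y ≠ 0) {C : ℝ}
    (hC : ∀ y, ‖f y / g y‖ ≤ C) : f x = 0 := by
  have hbdd : IsBoundedUnder (· ≤ ·) (𝓝[≠] x) (norm ∘ fun y => f y / g y) :=
    isBoundedUnder_of ⟨C, hC⟩
  have hlim : Tendsto f (𝓝[≠] x) (𝓝 0) := by
    refine (isBoundedUnder_le_mul_tendsto_zero hbdd hg).congr' ?_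
    filter_upwards [hg_ne] with y hy using div_mul_cancel₀ _ hy
  exact tendsto_nhds_unique (hf.mono_left nhdsWithin_le_nhds) hlim

lemma norm_div_le_of_norm_le_mul_norm {𝕜 : Type*} [NormedDivisionRing 𝕜] {x y : 𝕜} {K : ℝ}
    (hK : 0 ≤ K) (h : ‖x‖ ≤ K * ‖y‖) : ‖x / y‖ ≤ K := by
  rw [norm_div]
  exact div_le_of_le_mul₀ (norm_nonneg _) hK h

section Denom

variable (b : ℝ)

lemma denom_zero_re (p : ℝ) : (denom 0 b p).re = p ^ 4 := by
  simp [denom, ← Complex.ofReal_pow]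

lemma denom_zero_im (p : ℝ) : (denom 0 b p).im = -(b * p) := by
  simp [denom, ← Complex.ofReal_pow]

lemma pow_four_abs_le_norm_denom_zero (p : ℝ) : |p| ^ 4 ≤ ‖denom 0 b p‖ := by
  simpa [denom_zero_re, abs_pow] using Complex.abs_re_le_norm (denom 0 b p)

lemma abs_mul_abs_le_norm_denom_zero (p : ℝ) : |b| * |p| ≤ ‖denom 0 b p‖ := by
  simpa [denom_zero_im, abs_mul] using Complex.abs_im_le_norm (denom 0 b p)

lemma denom_zero_ne_zero {p : ℝ} (hp : p ≠ 0) : denom 0 b p ≠ 0 := fun h => by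
  have hre := denom_zero_re b p
  rw [h, Complex.zero_re] at hre
  exact pow_ne_zero 4 hp hre.symm

lemma tendsto_denom_zero : Tendsto (denom 0 b) (𝓝 0) (𝓝 0) := by
  have : Continuous (denom 0 b) := by unfold denom; fun_prop
  simpa [denom] using this.tendsto 0

end Denom

section FourierTransform

variable {G : ℝ → ℝ}

lemma norm_cexp_neg_I_mul (p x : ℝ) : ‖Complex.exp (-Complex.I * p * x)‖ = 1 := by
  simpa [mul_comm, mul_left_comm] using Complex.norm_exp_I_mul_ofReal (-(p * x))

lemma norm_cexp_neg_I_mul_sub_one_le (p x : ℝ) :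
    ‖Complex.exp (-Complex.I * p * x) - 1‖ ≤ |p| * |x| := by
  simpa [abs_mul, mul_comm, mul_left_comm] using
    Real.norm_exp_I_mul_ofReal_sub_one_le (x := -(p * x))

lemma norm_one_div_sqrt_two_pi :
    ‖(1 / Real.sqrt (2 * Real.pi) : ℂ)‖ = (Real.sqrt (2 * Real.pi))⁻¹ := by
  rw [norm_div, norm_one, Complex.norm_real, Real.norm_of_nonneg (Real.sqrt_nonneg _), one_div]

lemma integrable_fourierIntegrand (hG : Integrable G) (p : ℝ) :
    Integrable (fun x : ℝ => (G x : ℂ) * Complex.exp (-Complex.I * p * x)) := by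
  refine hG.ofReal.mul_bdd (c := 1) (by fun_prop) (.of_forall fun x => ?_)
  rw [norm_cexp_neg_I_mul]

lemma continuous_fourierTransform (hG : Integrable G) : Continuous (fourierTransform G) := by
  refine continuous_const.mul (continuous_of_dominated (bound := fun x => ‖G x‖)
    (fun p => (integrable_fourierIntegrand hG p).aestronglyMeasurable) (fun p => ?_) hG.norm ?_)
  · filter_upwards with x
    rw [norm_mul, norm_cexp_neg_I_mul, mul_one, Complex.norm_real]
  · filter_upwards with x
    fun_prop

lemma fourierTransform_zero_s10 (G : ℝ → ℝ) :
    fourierTransform G 0 = (Real.sqrt (2 * Real.pi))⁻¹ * ((∫ x, G x : ℝ) : ℂ) := by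
  simp [fourierTransform, integral_complex_ofReal]

lemma fourierTransform_zero_eq_zero_iff : fourierTransform G 0 = 0 ↔ ∫ x, G x = 0 := by
  simp [fourierTransform_zero_s10, Real.sqrt_eq_zero', Real.pi_pos]

lemma norm_fourierTransform_le (p : ℝ) :
    ‖fourierTransform G p‖ ≤ (Real.sqrt (2 * Real.pi))⁻¹ * ∫ x, |G x| := by
  rw [fourierTransform, norm_mul, norm_one_div_sqrt_two_pi]
  gcongr
  refine (norm_integral_le_integral_norm _).trans_eq ?_
  simp_rw [norm_mul, norm_cexp_neg_I_mul, mul_one, Complex.norm_real, Real.norm_eq_abs]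

lemma norm_fourierTransform_sub_fourierTransform_zero_le (hG : Integrable G)
    (hxG : Integrable fun x => x * G x) (p : ℝ) :
    ‖fourierTransform G p - fourierTransform G 0‖
      ≤ (Real.sqrt (2 * Real.pi))⁻¹ * (∫ x, |x * G x|) * |p| := by
  have hsub : fourierTransform G p - fourierTransform G 0 = 1 / Real.sqrt (2 * Real.pi) *
      ∫ x : ℝ, (G x : ℂ) * (Complex.exp (-Complex.I * p * x) - 1) := by
    rw [fourierTransform, fourierTransform, ← mul_sub, ← integral_sub
      (integrable_fourierIntegrand hG p) (integrable_fourierIntegrand hG 0)]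
    simp [mul_sub]
  rw [hsub, norm_mul, norm_one_div_sqrt_two_pi, mul_assoc]
  gcongr
  calc ‖∫ x : ℝ, (G x : ℂ) * (Complex.exp (-Complex.I * p * x) - 1)‖
      ≤ ∫ x, |x * G x| * |p| := by
        refine norm_integral_le_of_norm_le (hxG.norm.mul_const _) (.of_forall fun x => ?_)
        rw [norm_mul, Complex.norm_real, Real.norm_eq_abs, abs_mul]
        exact (mul_le_mul_of_nonneg_left (norm_cexp_neg_I_mul_sub_one_le p x)
          (abs_nonneg _)).trans_eq (by ring)
    _ = (∫ x, |x * G x|) * |p| := integral_mul_const _ _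

end FourierTransform

lemma norm_fourierTransform_div_denom_zero_le {G : ℝ → ℝ} (hG : Integrable G)
    (hxG : Integrable fun x => x * G x) {b : ℝ} (hb : b ≠ 0) (hG0 : ∫ x, G x = 0) (p : ℝ) :
    ‖fourierTransform G p / denom 0 b p‖
      ≤ (Real.sqrt (2 * Real.pi))⁻¹ * (∫ x, |x * G x|) / |b| := by
  set c := (Real.sqrt (2 * Real.pi))⁻¹ * ∫ x, |x * G x|
  refine norm_div_le_of_norm_le_mul_norm (by positivity) ?_
  calc ‖fourierTransform G p‖
      = ‖fourierTransform G p - fourierTransform G 0‖ := by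
        rw [fourierTransform_zero_eq_zero_iff.mpr hG0, sub_zero]
    _ ≤ c * |p| := norm_fourierTransform_sub_fourierTransform_zero_le hG hxG p
    _ = c / |b| * (|b| * |p|) := by field_simp
    _ ≤ c / |b| * ‖denom 0 b p‖ := by gcongr; exact abs_mul_abs_le_norm_denom_zero b p

lemma norm_pow_four_mul_fourierTransform_div_denom_zero_le (G : ℝ → ℝ) (b p : ℝ) :
    ‖(p : ℂ) ^ 4 * fourierTransform G p / denom 0 b p‖
      ≤ (Real.sqrt (2 * Real.pi))⁻¹ * ∫ x, |G x| := by
  refine norm_div_le_of_norm_le_mul_norm (by positivity) ?_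
  rw [norm_mul, norm_pow, Complex.norm_real, Real.norm_eq_abs, mul_comm]
  exact mul_le_mul (norm_fourierTransform_le p) (pow_four_abs_le_norm_denom_zero b p)
    (by positivity) (by positivity)

/-- Lemma A1 b): for `G, xG ∈ L¹(ℝ)` and `b ≠ 0`, `N_{0,b}` is finite (i.e. both
`Ĝ(p)/(p⁴ - ibp)` and `p⁴Ĝ(p)/(p⁴ - ibp)` are bounded) if and only if `∫ G = 0`. -/
theorem Nab_finite_zero_a_iff_orthogonality
    (G : ℝ → ℝ) (hG : Integrable G (volume : Measure ℝ))
    (hxG : Integrable (fun x => x * G x) (volume : Measure ℝ))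
    (b : ℝ) (hb : b ≠ 0) :
    ((∃ C : ℝ, ∀ p : ℝ, ‖fourierTransform G p / denom 0 b p‖ ≤ C) ∧
     (∃ C : ℝ, ∀ p : ℝ, ‖(p : ℂ) ^ 4 * fourierTransform G p / denom 0 b p‖ ≤ C)) ↔
    (∫ x : ℝ, G x) = 0 := by
  constructor
  · rintro ⟨⟨C, hC⟩, -⟩
    rw [← fourierTransform_zero_eq_zero_iff]
    exact eq_zero_of_norm_div_le_of_tendsto_zero (continuous_fourierTransform hG).continuousAt
      (tendsto_nhdsWithin_of_tendsto_nhds (tendsto_denom_zero b))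
      (eventually_mem_nhdsWithin.mono fun p hp => denom_zero_ne_zero b hp) hC
  · intro hG0
    exact ⟨⟨_, norm_fourierTransform_div_denom_zero_le hG hxG hb hG0⟩,
      ⟨_, norm_pow_four_mul_fourierTransform_div_denom_zero_le G b⟩⟩
end
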